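/- The number of walks on ℤ of length n starting at 0, with steps +1 or -1, that never visit a negative number equals the binomial coefficient C(n, ⌈n/2⌉). -/

import Mathlib

def psum {n : ℕ} (w : Fin n → ℤ) (k : ℕ) : ℤ :=
  ∑ i ∈ Finset.univ.filter (fun i : Fin n => (i : ℕ) < k), w i

/-!
Let `G n h` be the number of positive walks of length `n` ending at height at least `h`.
Splitting off the last step gives `G (n + 1) h = G n (h - 1) + G n (h + 1)`, where for `h = 0`
the truncation `0 - 1 = 0` is harmless because a positive walk ends at height `≥ 0`. This is
Pascal's rule for `G n h = C(n, ⌈(n + h) / 2⌉)`, except at `h = 0`, where it also needs the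
symmetry `C(n, ⌊n / 2⌋) = C(n, ⌈n / 2⌉)`. The theorem is the case `h = 0`.
-/

lemma psum_snoc {n : ℕ} (w : Fin n → ℤ) (x : ℤ) (k : ℕ) :
    psum (Fin.snoc w x : Fin (n + 1) → ℤ) k = psum w k + if n < k then x else 0 := by
  simp only [psum, Finset.sum_filter, Fin.sum_univ_castSucc, Fin.snoc_castSucc, Fin.snoc_last,
    Fin.val_castSucc, Fin.val_last]

lemma psum_of_le {n k : ℕ} (w : Fin n → ℤ) (hk : n ≤ k) : psum w k = psum w n := by
  unfold psum
  congr 1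
  ext i
  simp only [Finset.mem_filter, Finset.mem_univ, true_and]
  omega

def IsPositiveWalk {n : ℕ} (w : Fin n → ℤ) : Prop :=
  (∀ i, w i = 1 ∨ w i = -1) ∧ ∀ k, 0 ≤ psum w k

lemma isPositiveWalk_snoc {n : ℕ} (w : Fin n → ℤ) (x : ℤ) :
    IsPositiveWalk (Fin.snoc w x : Fin (n + 1) → ℤ) ↔
      IsPositiveWalk w ∧ (x = 1 ∨ x = -1) ∧ 0 ≤ psum w n + x := by
  simp only [IsPositiveWalk, Fin.forall_fin_succ', Fin.snoc_castSucc, Fin.snoc_last, psum_snoc]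
  constructor
  · rintro ⟨⟨hw, hx⟩, hpos⟩
    refine ⟨⟨hw, fun k => ?_⟩, hx, ?_⟩
    · rcases le_or_gt k n with hk | hk
      · simpa [hk.not_gt] using hpos k
      · simpa [psum_of_le w hk.le, hk] using hpos n
    · simpa [psum_of_le w n.le_succ] using hpos (n + 1)
  · rintro ⟨⟨hw, hpos⟩, hx, hlast⟩
    refine ⟨⟨hw, hx⟩, fun k => ?_⟩
    rcases le_or_gt k n with hk | hk
    · simpa [hk.not_gt] using hpos k
    · simpa [psum_of_le w hk.le, hk] using hlast

lemma finite_setOf_isPositiveWalk (n : ℕ) : {w : Fin n → ℤ | IsPositiveWalk w}.Finite :=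
  (Set.Finite.pi fun _ => Set.toFinite ({1, -1} : Set ℤ)).subset fun _ hw i _ => hw.1 i

lemma setOf_isPositiveWalk_le_psum_succ (n h : ℕ) :
    {w : Fin (n + 1) → ℤ | IsPositiveWalk w ∧ (h : ℤ) ≤ psum w (n + 1)} =
      (Fin.snoc · 1) '' {w | IsPositiveWalk w ∧ ((h - 1 : ℕ) : ℤ) ≤ psum w n} ∪
        (Fin.snoc · (-1)) '' {w | IsPositiveWalk w ∧ ((h + 1 : ℕ) : ℤ) ≤ psum w n} := by
  ext w
  obtain ⟨v, x, rfl⟩ : ∃ v x, w = Fin.snoc v x :=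
    ⟨Fin.init w, w (Fin.last n), (Fin.snoc_init_self w).symm⟩
  simp only [Set.mem_ofPred_eq, Set.mem_union, Set.mem_image, Fin.snoc_inj, isPositiveWalk_snoc,
    psum_snoc, psum_of_le v n.le_succ, Nat.lt_add_one, if_true]
  constructor
  · rintro ⟨⟨hv, rfl | rfl, -⟩, hh⟩
    · exact .inl ⟨v, ⟨hv, by have := hv.2 n; omega⟩, rfl, rfl⟩
    · exact .inr ⟨v, ⟨hv, by omega⟩, rfl, rfl⟩
  · rintro (⟨_, ⟨hv, hh⟩, rfl, rfl⟩ | ⟨_, ⟨hv, hh⟩, rfl, rfl⟩) <;>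
      exact ⟨⟨hv, by norm_num, by have := hv.2 n; omega⟩, by have := hv.2 n; omega⟩

lemma choose_succ_add_div_two (n h : ℕ) :
    (n + 1).choose ((n + 1 + h + 1) / 2) =
      n.choose ((n + (h - 1) + 1) / 2) + n.choose ((n + (h + 1) + 1) / 2) := by
  rcases h with _ | h
  · rw [show (n + 1 + 0 + 1) / 2 = n / 2 + 1 by omega, Nat.choose_succ_succ',
      Nat.choose_symm_of_eq_add (show n = n / 2 + (n + 1) / 2 by omega)]
  · rw [show (n + 1 + (h + 1) + 1) / 2 = (n + h + 1) / 2 + 1 by omega, Nat.choose_succ_succ']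
    congr 2; omega

theorem ncard_setOf_isPositiveWalk_le_psum (n h : ℕ) :
    {w : Fin n → ℤ | IsPositiveWalk w ∧ (h : ℤ) ≤ psum w n}.ncard =
      n.choose ((n + h + 1) / 2) := by
  induction n generalizing h with
  | zero =>
    rcases h with _ | h <;>
      simp [IsPositiveWalk, psum, Nat.choose_eq_zero_of_lt, Int.not_ofNat_neg]
  | succ n ih =>
    have hfin (p : (Fin n → ℤ) → Prop) : {w | IsPositiveWalk w ∧ p w}.Finite :=
      (finite_setOf_isPositiveWalk n).subset fun _ hw => hw.1
    have hinj (x : ℤ) := Fin.snoc_left_injective (α := fun _ : Fin (n + 1) => ℤ) x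
    rw [setOf_isPositiveWalk_le_psum_succ, Set.ncard_union_eq ?_ ((hfin _).image _)
      ((hfin _).image _), Set.ncard_image_of_injective _ (hinj _),
      Set.ncard_image_of_injective _ (hinj _), ih, ih, choose_succ_add_div_two]
    rw [Set.disjoint_left]
    rintro _ ⟨v, -, rfl⟩ ⟨v', -, hv⟩
    simpa using congrFun hv (Fin.last n)

theorem stmt1 (n : ℕ) :
    {w : Fin n → ℤ |
        (∀ i, w i = 1 ∨ w i = -1) ∧ (∀ k, 0 ≤ psum w k)}.ncard
      = Nat.choose n ((n + 1) / 2) := by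
  have h := ncard_setOf_isPositiveWalk_le_psum n 0
  rw [Nat.cast_zero, add_zero] at h
  rw [← h]
  congr 1
  ext w
  exact ⟨fun hw => ⟨hw, hw.2 n⟩, And.left⟩
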